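/- Let λ > 0 and β ∈ (0,1). For any embeddings U, V and weight vector w such that U and V are not both zero, the rescaled point (βU, βV, β⁻²w) satisfies F(βU, βV, β⁻²w) < F(U, V, w), where F is the generalized CF objective with the element-wise (Hadamard) product interaction. In particular, the data-fitting term is unchanged by the rescaling (since ⟨β⁻²w, (βu_i) ⊙ (βv_j)⟩ = ⟨w, u_i ⊙ v_j⟩ for every (i,j)), while the regularization term is strictly decreased. -/
import Mathlib


open Finset

/-- Generalized CF objective with the element-wise (Hadamard) product interaction:
`F(U,V,w) = Σ_{(i,j)∈Ω} ℓ(⟨w, u_i ⊙ v_j⟩, O_{ij}) + (λ/2)Σ_i ‖u_i‖² + (λ/2)Σ_j ‖v_j‖²`. -/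
noncomputable def cfObjHadamard {k m n : ℕ} (lam : ℝ) (Ω : Finset (Fin m × Fin n))
    (O : Fin m × Fin n → ℝ) (ℓ : ℝ → ℝ → ℝ)
    (U : Fin m → Fin k → ℝ) (V : Fin n → Fin k → ℝ) (w : Fin k → ℝ) : ℝ :=
  (∑ p ∈ Ω, ℓ (∑ l, w l * (U p.1 l * V p.2 l)) (O p))
    + lam / 2 * ∑ i, ∑ l, (U i l) ^ 2
    + lam / 2 * ∑ j, ∑ l, (V j l) ^ 2

/-- For `λ > 0` and `β ∈ (0,1)`, if `U` and `V` are not both zero, then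
`F(βU, βV, β⁻²w) < F(U, V, w)` for the Hadamard-product interaction; the data-fitting
term is unchanged by the rescaling while the regularization term strictly decreases. -/
theorem rescaling_decreases_hadamard_objective {k m n : ℕ} (lam : ℝ) (hlam : 0 < lam)
    (β : ℝ) (hβ : β ∈ Set.Ioo (0 : ℝ) 1)
    (Ω : Finset (Fin m × Fin n)) (O : Fin m × Fin n → ℝ) (ℓ : ℝ → ℝ → ℝ)
    (U : Fin m → Fin k → ℝ) (V : Fin n → Fin k → ℝ) (w : Fin k → ℝ)
    (hUV : ¬ (U = 0 ∧ V = 0)) :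
    cfObjHadamard lam Ω O ℓ (fun i l => β * U i l) (fun j l => β * V j l)
        (fun l => (β ^ 2)⁻¹ * w l)
      < cfObjHadamard lam Ω O ℓ U V w ∧
    (∀ i j, (∑ l, ((β ^ 2)⁻¹ * w l) * ((β * U i l) * (β * V j l)))
        = ∑ l, w l * (U i l * V j l)) ∧
    (lam / 2 * ∑ i, ∑ l, (β * U i l) ^ 2 + lam / 2 * ∑ j, ∑ l, (β * V j l) ^ 2
      < lam / 2 * ∑ i, ∑ l, (U i l) ^ 2 + lam / 2 * ∑ j, ∑ l, (V j l) ^ 2) := by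

  obtain ⟨hβ0, hβ1⟩ := hβ
  have hβ2 : (β ^ 2) ≠ 0 := by positivity
  have hdata : ∀ (i : Fin m) (j : Fin n),
      (∑ l, ((β ^ 2)⁻¹ * w l) * ((β * U i l) * (β * V j l)))
        = ∑ l, w l * (U i l * V j l) := by
    intro i j
    refine Finset.sum_congr rfl fun l _ => ?_
    field_simp
  set S : ℝ := (∑ i, ∑ l, (U i l) ^ 2) + ∑ j, ∑ l, (V j l) ^ 2 with hS
  have hSpos : 0 < S := by
    rcases not_and_or.mp hUV with h | h
    · obtain ⟨i, hi⟩ : ∃ i, U i ≠ 0 := by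
        by_contra hc; push_neg at hc; exact h (funext fun i => hc i)
      obtain ⟨l, hl⟩ : ∃ l, U i l ≠ 0 := by
        by_contra hc; push_neg at hc; exact hi (funext fun l => hc l)
      have h1 : 0 < ∑ i, ∑ l, (U i l) ^ 2 := by
        have : 0 < ∑ l, (U i l) ^ 2 :=
          Finset.sum_pos' (fun _ _ => sq_nonneg _) ⟨l, Finset.mem_univ l, by positivity⟩
        exact Finset.sum_pos' (fun _ _ => Finset.sum_nonneg fun _ _ => sq_nonneg _)
          ⟨i, Finset.mem_univ i, this⟩
      have h2 : 0 ≤ ∑ j, ∑ l, (V j l) ^ 2 :=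
        Finset.sum_nonneg fun _ _ => Finset.sum_nonneg fun _ _ => sq_nonneg _
      linarith
    · obtain ⟨j, hj⟩ : ∃ j, V j ≠ 0 := by
        by_contra hc; push_neg at hc; exact h (funext fun j => hc j)
      obtain ⟨l, hl⟩ : ∃ l, V j l ≠ 0 := by
        by_contra hc; push_neg at hc; exact hj (funext fun l => hc l)
      have h1 : 0 < ∑ j, ∑ l, (V j l) ^ 2 := by
        have : 0 < ∑ l, (V j l) ^ 2 :=
          Finset.sum_pos' (fun _ _ => sq_nonneg _) ⟨l, Finset.mem_univ l, by positivity⟩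
        exact Finset.sum_pos' (fun _ _ => Finset.sum_nonneg fun _ _ => sq_nonneg _)
          ⟨j, Finset.mem_univ j, this⟩
      have h2 : 0 ≤ ∑ i, ∑ l, (U i l) ^ 2 :=
        Finset.sum_nonneg fun _ _ => Finset.sum_nonneg fun _ _ => sq_nonneg _
      linarith
  have hUscale : (∑ i, ∑ l, (β * U i l) ^ 2) = β ^ 2 * ∑ i, ∑ l, (U i l) ^ 2 := by
    rw [Finset.mul_sum]; refine Finset.sum_congr rfl fun i _ => ?_
    rw [Finset.mul_sum]; exact Finset.sum_congr rfl fun l _ => by ring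
  have hVscale : (∑ j, ∑ l, (β * V j l) ^ 2) = β ^ 2 * ∑ j, ∑ l, (V j l) ^ 2 := by
    rw [Finset.mul_sum]; refine Finset.sum_congr rfl fun j _ => ?_
    rw [Finset.mul_sum]; exact Finset.sum_congr rfl fun l _ => by ring
  have hβ2lt : β ^ 2 < 1 := by nlinarith
  have hreg : lam / 2 * ∑ i, ∑ l, (β * U i l) ^ 2 + lam / 2 * ∑ j, ∑ l, (β * V j l) ^ 2
      < lam / 2 * ∑ i, ∑ l, (U i l) ^ 2 + lam / 2 * ∑ j, ∑ l, (V j l) ^ 2 := by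
    rw [hUscale, hVscale]
    have h1 : 0 < 1 - β ^ 2 := by linarith
    have key : 0 < lam * ((1 - β ^ 2) * S) := mul_pos hlam (mul_pos h1 hSpos)
    rw [hS] at key; nlinarith [key]
  refine ⟨?_, hdata, hreg⟩
  unfold cfObjHadamard
  have hdat : (∑ p ∈ Ω, ℓ (∑ l, ((β ^ 2)⁻¹ * w l) * ((β * U p.1 l) * (β * V p.2 l))) (O p))
      = ∑ p ∈ Ω, ℓ (∑ l, w l * (U p.1 l * V p.2 l)) (O p) := by
    refine Finset.sum_congr rfl fun p _ => ?_
    rw [hdata p.1 p.2]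
  rw [hdat]
  linarith [hreg]
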